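/- Let G be a finite abelian group, H a subgroup of G, g an element of G not in H, and n the order of the coset gH in G/H. Then for any character χ of H (a homomorphism H → ℂˣ) and any complex number ζ with ζ^n = χ(g^n), there exists a character ψ of G extending χ with ψ(g) = ζ. -/

import Mathlib

/-! Adjoining `g` to `H`: the homomorphism `(h, k) ↦ h * g ^ k` from `H × ℤ` to `G` has kernel
contained in that of `(h, k) ↦ χ h * ζ ^ k`, because `g ^ k ∈ H` forces `n ∣ k` and then
`ζ ^ n = χ (g ^ n)` makes the two factors cancel. So the second map factors through the range
of the first, and a character of a subgroup of a finite abelian group extends to the whole group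
(`MonoidHom.domRestrict_surjective`). -/

open MonoidHom

theorem MonoidHom.exists_comp_eq_of_ker_le {A G M : Type*} [Group A] [CommGroup G] [Finite G]
    [CommMonoid M] [HasEnoughRootsOfUnity M (Monoid.exponent G)] (f : A →* G) (φ : A →* Mˣ)
    (hker : f.ker ≤ φ.ker) : ∃ ψ : G →* Mˣ, ψ.comp f = φ := by
  let φ' : f.range →* Mˣ :=
    f.rangeRestrict.liftOfSurjective f.rangeRestrict_surjective ⟨φ, by rwa [ker_rangeRestrict]⟩
  obtain ⟨ψ, hψ⟩ := MonoidHom.domRestrict_surjective (M := M) f.range φ'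
  refine ⟨ψ, MonoidHom.ext fun a ↦ ?_⟩
  simpa [φ'] using DFunLike.congr_fun hψ (f.rangeRestrict a)

theorem Subgroup.ker_coprod_zpowersHom_le {G M : Type*} [CommGroup G] [CommGroup M]
    (H : Subgroup G) (g : G) (n : ℕ) (hn : n = orderOf (g : G ⧸ H)) (hgn : g ^ n ∈ H)
    (χ : H →* M) (ζ : M) (hζ : ζ ^ n = χ ⟨g ^ n, hgn⟩) :
    (H.subtype.coprod (zpowersHom G g)).ker ≤ (χ.coprod (zpowersHom M ζ)).ker := by
  rintro ⟨h, k⟩ hhk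
  simp only [mem_ker, coprod_apply, zpowersHom_apply] at hhk ⊢
  generalize k.toAdd = j at hhk ⊢
  have hh : (h : G) = (g ^ j)⁻¹ := eq_inv_of_mul_eq_one_left hhk
  obtain ⟨m, rfl⟩ : (n : ℤ) ∣ j := by
    rw [hn, orderOf_dvd_iff_zpow_eq_one, ← QuotientGroup.mk_zpow, QuotientGroup.eq_one_iff,
      ← inv_mem_iff, ← hh]
    exact h.2
  have hh' : h = (⟨g ^ n, hgn⟩ : H) ^ (-m) := by
    ext
    simp [hh, zpow_mul]
  rw [hh', map_zpow, ← hζ, ← zpow_natCast, ← zpow_mul, ← zpow_add, mul_neg, neg_add_cancel,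
    zpow_zero]

theorem stmt_0_general {G : Type*} [CommGroup G] [Finite G] (H : Subgroup G) (g : G)
    (n : ℕ) (hn : n = orderOf ((g : G ⧸ H)))
    (hgn : g ^ n ∈ H) (χ : H →* ℂˣ) (ζ : ℂˣ) (hζ : ζ ^ n = χ ⟨g ^ n, hgn⟩) :
    ∃ ψ : G →* ℂˣ, (∀ h : H, ψ (h : G) = χ h) ∧ ψ g = ζ := by
  obtain ⟨ψ, hψ⟩ := exists_comp_eq_of_ker_le _ _ (H.ker_coprod_zpowersHom_le g n hn hgn χ ζ hζ)
  refine ⟨ψ, fun h ↦ ?_, ?_⟩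
  · simpa using DFunLike.congr_fun hψ (h, 1)
  · simpa using DFunLike.congr_fun hψ (1, .ofAdd 1)

/-- Character extension lemma: a character of `H` extends to `G` with prescribed
value at `g`, any `n`-th root of `χ (g ^ n)` where `n` is the order of `gH` in `G ⧸ H`. -/
theorem stmt_0 {G : Type*} [CommGroup G] [Finite G] (H : Subgroup G) (g : G)
    (hg : g ∉ H) (n : ℕ) (hn : n = orderOf ((g : G ⧸ H)))
    (hgn : g ^ n ∈ H) (χ : H →* ℂˣ) (ζ : ℂˣ) (hζ : ζ ^ n = χ ⟨g ^ n, hgn⟩) :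
    ∃ ψ : G →* ℂˣ, (∀ h : H, ψ (h : G) = χ h) ∧ ψ g = ζ :=
  stmt_0_general H g n hn hgn χ ζ hζ
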